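/- arXiv:2410.14843 — 3 statements merged into one kernel-verified Lean document; each statement's English description precedes it below -/
import Mathlib

section
/- For a random variable X with E[X] = m and a point y ∈ ℝ with P(X = y) = 0, the function F(c) := E|X − c| is differentiable at c with derivative E[sign(c − X)]; consequently the one-sample estimator sign(y^sim − y) is an unbiased estimator of the derivative of E|Y_φ − y| with respect to a location-shift parameter φ, when Y_φ = φ + ε with ε having a continuous distribution. -/
/-!
`c ↦ |x - c|` is 1-Lipschitz and has derivative `sign (c - x)` away from `c = x`; when `X = c`
is a null event, dominated differentiation under the integral gives `E[sign (c - X)]`. The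
location family is the special case `X = y - ε`, since `|(φ + ε) - y| = |(y - ε) - φ|`.
-/

open MeasureTheory

theorem Real.coe_sign_eq_sign (r : ℝ) : (SignType.sign r : ℝ) = Real.sign r := by
  rcases lt_trichotomy r 0 with h | rfl | h
  · simp [h, Real.sign_of_neg]
  · simp
  · simp [h, Real.sign_of_pos]

theorem Real.measurable_sign : Measurable Real.sign := by
  unfold Real.sign
  exact Measurable.ite (measurableSet_lt measurable_id measurable_const) measurable_const
    (Measurable.ite (measurableSet_lt measurable_const measurable_id) measurable_const
      measurable_const)

theorem hasDerivAt_abs_sub {x c : ℝ} (h : x ≠ c) :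
    HasDerivAt (fun t => |x - t|) (Real.sign (c - x)) c := by
  have hd := (hasDerivAt_abs (sub_ne_zero.2 h.symm)).comp c ((hasDerivAt_id c).sub_const x)
  simpa only [Function.comp_def, id, abs_sub_comm _ x, mul_one, Real.coe_sign_eq_sign] using hd

theorem lipschitzWith_abs_sub (x : ℝ) : LipschitzWith 1 fun t : ℝ => |x - t| :=
  LipschitzWith.dist_right x

theorem hasDerivAt_integral_abs_sub {Ω : Type*} [MeasurableSpace Ω] (μ : Measure Ω)
    [IsFiniteMeasure μ] {X : Ω → ℝ} (hX : Integrable X μ) {c : ℝ} (hc : μ {ω | X ω = c} = 0) :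
    HasDerivAt (fun t => ∫ ω, |X ω - t| ∂μ) (∫ ω, Real.sign (c - X ω) ∂μ) c := by
  have hXc : ∀ᵐ ω ∂μ, X ω ≠ c := measure_eq_zero_iff_ae_notMem.1 hc
  refine (hasDerivAt_integral_of_dominated_loc_of_lip (bound := fun _ => 1)
    (Metric.ball_mem_nhds c one_pos) ?_ ?_ ?_ ?_ (integrable_const 1) ?_).2
  · exact .of_forall fun t => (hX.sub (integrable_const t)).abs.aestronglyMeasurable
  · exact (hX.sub (integrable_const c)).abs
  · exact (Real.measurable_sign.comp_aemeasurable
      (aemeasurable_const.sub hX.aemeasurable)).aestronglyMeasurable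
  · exact .of_forall fun ω => by
      simpa using (lipschitzWith_abs_sub (X ω)).lipschitzOnWith
  · filter_upwards [hXc] with ω hω using hasDerivAt_abs_sub hω

theorem hasDerivAt_integral_abs_add_sub (q : Measure ℝ) [IsFiniteMeasure q]
    [NullSingletonClass q] (hq : Integrable id q) (y φ : ℝ) :
    HasDerivAt (fun s => ∫ e, |(s + e) - y| ∂q) (∫ e, Real.sign ((φ + e) - y) ∂q) φ := by
  have hX : Integrable (fun e => y - e) q := (integrable_const y).sub hq
  have hnull : q {e | y - e = φ} = 0 := by
    convert measure_singleton (μ := q) (y - φ) using 2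
    ext e
    show y - e = φ ↔ e = y - φ
    constructor <;> intro h <;> linarith
  have hshift : ∀ s e : ℝ, |s + e - y| = |y - e - s| := fun s e => by
    rw [abs_sub_comm, sub_add_eq_sub_sub_swap]
  simpa only [hshift, sub_sub_eq_add_sub] using hasDerivAt_integral_abs_sub q hX hnull

theorem stmt11_general {Ω : Type*} [MeasurableSpace Ω] (P : Measure Ω)
    [IsProbabilityMeasure P]
    (X : Ω → ℝ) (hXint : Integrable X P)
    (y : ℝ) (hnoatom : P {ω | X ω = y} = 0)
    (q : Measure ℝ) [IsProbabilityMeasure q] [NullSingletonClass q]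
    (hεint : Integrable (fun e => |e|) q) :
    HasDerivAt (fun c => ∫ ω, |X ω - c| ∂P)
      (∫ ω, Real.sign (y - X ω) ∂P) y ∧
    (∀ φ : ℝ, HasDerivAt (fun s => ∫ e, |(s + e) - y| ∂q)
      (∫ e, Real.sign ((φ + e) - y) ∂q) φ) :=
  ⟨hasDerivAt_integral_abs_sub P hXint hnoatom,
    hasDerivAt_integral_abs_add_sub q ((integrable_norm_iff aestronglyMeasurable_id).1 hεint) y⟩

/-- For an integrable random variable `X` with `P(X = y) = 0`, the function
`F(c) = E|X − c|` is differentiable at `y` with derivative `E[sign(y − X)]`;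
consequently, for a location family `Y_φ = φ + ε` with `ε ~ q` atomless and
integrable, `E[sign(y^sim − y)]` is an unbiased estimator of the derivative of
`φ ↦ E|Y_φ − y|`. -/
theorem stmt11 {Ω : Type*} [MeasurableSpace Ω] (P : Measure Ω)
    [IsProbabilityMeasure P]
    (X : Ω → ℝ) (hXm : Measurable X) (hXint : Integrable X P)
    (y : ℝ) (hnoatom : P {ω | X ω = y} = 0)
    (q : Measure ℝ) [IsProbabilityMeasure q] [NullSingletonClass q]
    (hεint : Integrable (fun e => |e|) q) :
    HasDerivAt (fun c => ∫ ω, |X ω - c| ∂P)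
      (∫ ω, Real.sign (y - X ω) ∂P) y ∧
    (∀ φ : ℝ, HasDerivAt (fun s => ∫ e, |(s + e) - y| ∂q)
      (∫ e, Real.sign ((φ + e) - y) ∂q) φ) :=
  stmt11_general P X hXint y hnoatom q hεint
end

section
/- CRPS is a proper scoring rule: for integrable real random variables with CDFs F (forecast) and G (truth), E_{y∼G}[−E|X−y| + (1/2)E|X−X'|] ≤ E_{y∼G}[−E|Y−y| + (1/2)E|Y−Y'|], where X,X' ~ F and Y,Y' ~ G are independent; equivalently E|X−Y| − (1/2)E|X−X'| − (1/2)E|Y−Y'| ≥ 0. -/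
/-!
Writing `|x - y| = λ[x, y) + λ[y, x)` and applying Tonelli gives, for distribution functions
`F` and `G`, `E|X - Y| = ∫ F (1 - G) + G (1 - F) dt`. Hence
`2 E|X - Y| - E|X - X'| - E|Y - Y'| = 2 ∫ (F - G)² dt ≥ 0`, and the properness of CRPS is the
same inequality after integrating out the constant terms.
-/

open MeasureTheory Set
open scoped ENNReal

lemma ENNReal.ofReal_abs_sub (x y : ℝ) :
    ENNReal.ofReal |x - y| = ENNReal.ofReal (y - x) + ENNReal.ofReal (x - y) := by
  rcases le_total x y with h | h
  · rw [abs_of_nonpos (sub_nonpos.2 h), ENNReal.ofReal_of_nonpos (sub_nonpos.2 h), neg_sub,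
      add_zero]
  · rw [abs_of_nonneg (sub_nonneg.2 h), ENNReal.ofReal_of_nonpos (sub_nonpos.2 h), zero_add]

lemma ENNReal.mul_one_sub_add_mul_one_sub_le {a b : ℝ≥0∞} (ha : a ≤ 1) (hb : b ≤ 1) :
    a * (1 - a) + b * (1 - b) ≤ a * (1 - b) + b * (1 - a) := by
  lift a to NNReal using ne_top_of_le_ne_top ENNReal.one_ne_top ha
  lift b to NNReal using ne_top_of_le_ne_top ENNReal.one_ne_top hb
  rw [ENNReal.coe_le_one_iff] at ha hb
  norm_cast
  rw [← NNReal.coe_le_coe]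
  push_cast [NNReal.coe_sub ha, NNReal.coe_sub hb]
  nlinarith [sq_nonneg ((a : ℝ) - b)]

section
variable (ν ρ : Measure ℝ)

lemma lintegral_prod_ofReal_sub [SFinite ν] [SFinite ρ] :
    ∫⁻ p, ENNReal.ofReal (p.2 - p.1) ∂(ν.prod ρ) = ∫⁻ t, ν (Iic t) * ρ (Ioi t) := by
  have hS : MeasurableSet {q : (ℝ × ℝ) × ℝ | q.1.1 ≤ q.2 ∧ q.2 < q.1.2} :=
    (measurableSet_le (measurable_fst.comp measurable_fst) measurable_snd).inter
      (measurableSet_lt measurable_snd (measurable_snd.comp measurable_fst))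
  calc ∫⁻ p, ENNReal.ofReal (p.2 - p.1) ∂(ν.prod ρ)
      = ∫⁻ p, volume (Ico p.1 p.2) ∂(ν.prod ρ) := by simp_rw [Real.volume_Ico]
    _ = ((ν.prod ρ).prod volume) {q | q.1.1 ≤ q.2 ∧ q.2 < q.1.2} :=
        (Measure.prod_apply hS).symm
    _ = ∫⁻ t, (ν.prod ρ) (Iic t ×ˢ Ioi t) := Measure.prod_apply_symm hS
    _ = ∫⁻ t, ν (Iic t) * ρ (Ioi t) := by simp_rw [Measure.prod_prod]

lemma measurable_measure_Iic : Measurable fun t => ν (Iic t) :=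
  Monotone.measurable fun _ _ h => measure_mono (Iic_subset_Iic.2 h)

lemma measurable_measure_Ioi : Measurable fun t => ν (Ioi t) :=
  Antitone.measurable fun _ _ h => measure_mono (Ioi_subset_Ioi h)

noncomputable def cdfCrossIntegral : ℝ≥0∞ :=
  ∫⁻ t, (ν (Iic t) * ρ (Ioi t) + ρ (Iic t) * ν (Ioi t))

lemma lintegral_prod_ofReal_abs_sub [SFinite ν] [SFinite ρ] :
    ∫⁻ p, ENNReal.ofReal |p.1 - p.2| ∂(ν.prod ρ) = cdfCrossIntegral ν ρ := by
  have hmeas : Measurable fun p : ℝ × ℝ => ENNReal.ofReal (p.2 - p.1) := by fun_prop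
  simp_rw [ENNReal.ofReal_abs_sub, lintegral_add_left hmeas]
  rw [← lintegral_prod_swap (fun p : ℝ × ℝ => ENNReal.ofReal (p.1 - p.2))]
  simp only [Prod.fst_swap, Prod.snd_swap]
  rw [lintegral_prod_ofReal_sub, lintegral_prod_ofReal_sub]
  exact (lintegral_add_left ((measurable_measure_Iic ν).mul (measurable_measure_Ioi ρ)) _).symm

lemma cdfCrossIntegral_self_add_self_le [IsProbabilityMeasure ν] [IsProbabilityMeasure ρ] :
    cdfCrossIntegral ν ν + cdfCrossIntegral ρ ρ ≤ 2 * cdfCrossIntegral ν ρ := by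
  have hIoi (μ : Measure ℝ) [IsProbabilityMeasure μ] (t : ℝ) :
      μ (Ioi t) = 1 - μ (Iic t) := by
    rw [← compl_Iic, prob_compl_eq_one_sub measurableSet_Iic]
  have hmeas (μ μ' : Measure ℝ) :
      Measurable fun t => μ (Iic t) * μ' (Ioi t) + μ' (Iic t) * μ (Ioi t) :=
    ((measurable_measure_Iic μ).mul (measurable_measure_Ioi μ')).add
      ((measurable_measure_Iic μ').mul (measurable_measure_Ioi μ))
  rw [cdfCrossIntegral, cdfCrossIntegral, cdfCrossIntegral,
    ← lintegral_add_left (hmeas ν ν), ← lintegral_const_mul _ (hmeas ν ρ)]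
  refine lintegral_mono fun t => ?_
  have hcdf := ENNReal.mul_one_sub_add_mul_one_sub_le (prob_le_one (μ := ν) (s := Iic t))
    (prob_le_one (μ := ρ) (s := Iic t))
  simp only [hIoi]
  calc _ = 2 * (ν (Iic t) * (1 - ν (Iic t)) + ρ (Iic t) * (1 - ρ (Iic t))) := by ring
    _ ≤ _ := by gcongr

variable {ν ρ}

lemma integrable_abs_sub_prod [IsFiniteMeasure ν] [IsFiniteMeasure ρ]
    (hν : Integrable (fun x => |x|) ν) (hρ : Integrable (fun x => |x|) ρ) :
    Integrable (fun p : ℝ × ℝ => |p.1 - p.2|) (ν.prod ρ) := by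
  refine Integrable.mono' ((hν.comp_fst ρ).add (hρ.comp_snd ν)) (by fun_prop) ?_
  exact Filter.Eventually.of_forall fun p => by simpa using abs_sub p.1 p.2

lemma integral_integral_abs_sub [IsFiniteMeasure ν] [IsFiniteMeasure ρ]
    (hν : Integrable (fun x => |x|) ν) (hρ : Integrable (fun x => |x|) ρ) :
    ∫ x, ∫ y, |x - y| ∂ρ ∂ν = (cdfCrossIntegral ν ρ).toReal := by
  rw [← integral_prod _ (integrable_abs_sub_prod hν hρ),
    integral_eq_lintegral_of_nonneg_ae (.of_forall fun _ => abs_nonneg _) (by fun_prop),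
    lintegral_prod_ofReal_abs_sub]

lemma cdfCrossIntegral_ne_top [IsFiniteMeasure ν] [IsFiniteMeasure ρ]
    (hν : Integrable (fun x => |x|) ν) (hρ : Integrable (fun x => |x|) ρ) :
    cdfCrossIntegral ν ρ ≠ ⊤ := by
  rw [← lintegral_prod_ofReal_abs_sub]
  exact (integrable_abs_sub_prod hν hρ).lintegral_lt_top.ne

end

section
variable {ν ρ : Measure ℝ} [IsProbabilityMeasure ν] [IsProbabilityMeasure ρ]

lemma integral_integral_abs_sub_add_le
    (hν : Integrable (fun x => |x|) ν) (hρ : Integrable (fun x => |x|) ρ) :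
    ∫ x, ∫ x', |x - x'| ∂ν ∂ν + ∫ y, ∫ y', |y - y'| ∂ρ ∂ρ
      ≤ 2 * ∫ x, ∫ y, |x - y| ∂ρ ∂ν := by
  rw [integral_integral_abs_sub hν hν, integral_integral_abs_sub hρ hρ,
    integral_integral_abs_sub hν hρ, ← ENNReal.toReal_add (cdfCrossIntegral_ne_top hν hν)
      (cdfCrossIntegral_ne_top hρ hρ), ← ENNReal.toReal_ofNat, ← ENNReal.toReal_mul]
  exact ENNReal.toReal_mono
    (ENNReal.mul_ne_top ENNReal.ofNat_ne_top (cdfCrossIntegral_ne_top hν hρ))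
    (cdfCrossIntegral_self_add_self_le ν ρ)

lemma integral_neg_integral_abs_sub_add_const
    (hν : Integrable (fun x => |x|) ν) (hρ : Integrable (fun x => |x|) ρ) (c : ℝ) :
    ∫ y, (-(∫ x, |x - y| ∂ν) + c) ∂ρ = -∫ x, ∫ y, |x - y| ∂ρ ∂ν + c := by
  have hint := integrable_abs_sub_prod hν hρ
  have hinner : Integrable (fun y => -∫ x, |x - y| ∂ν) ρ := hint.integral_prod_right.neg
  rw [integral_add hinner (integrable_const c), integral_neg,
    ← integral_integral_swap (f := fun x y => |x - y|) hint, integral_const, probReal_univ,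
    one_smul]

end

/-- CRPS is a proper scoring rule: for integrable distributions `ν` (forecast)
and `ρ` (truth) on ℝ,
`E_{y∼ρ}[−E|X−y| + ½E|X−X'|] ≤ E_{y∼ρ}[−E|Y−y| + ½E|Y−Y'|]`
where `X,X' ~ ν` and `Y,Y' ~ ρ` are independent; equivalently, the energy
distance `E|X−Y| − ½E|X−X'| − ½E|Y−Y'|` is nonnegative. -/
theorem stmt13 (ν ρ : Measure ℝ) [IsProbabilityMeasure ν] [IsProbabilityMeasure ρ]
    (hν : Integrable (fun x => |x|) ν) (hρ : Integrable (fun x => |x|) ρ) :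
    (∫ y, (-(∫ x, |x - y| ∂ν) + (1 / 2) * ∫ x, ∫ x', |x - x'| ∂ν ∂ν) ∂ρ
        ≤ ∫ y, (-(∫ x, |x - y| ∂ρ) + (1 / 2) * ∫ x, ∫ x', |x - x'| ∂ρ ∂ρ) ∂ρ) ∧
    (0 ≤ (∫ x, ∫ y, |x - y| ∂ρ ∂ν)
        - (1 / 2) * (∫ x, ∫ x', |x - x'| ∂ν ∂ν)
        - (1 / 2) * (∫ y, ∫ y', |y - y'| ∂ρ ∂ρ)) := by
  have h := integral_integral_abs_sub_add_le hν hρ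
  rw [integral_neg_integral_abs_sub_add_const hν hρ,
    integral_neg_integral_abs_sub_add_const hρ hρ]
  constructor <;> linarith
end

section
/- Let θ₁,...,θ_M be i.i.d. from density q_φ and t₁,...,t_M i.i.d. Uniform(0,1), independent. Suppose 0 < p(y|θ) ≤ C for all θ. Conditional on the event that at least one j satisfies t_j < p(y|θ_j)/C, the rejection-sampling estimator g^RS = [Σ_j 1{t_j < p(y|θ_j)/C} ∂_φ log q_φ(θ_j)] / [Σ_j 1{t_j < p(y|θ_j)/C}] has expectation equal to ∂_φ log ∫ p(y|θ) q_φ(θ) dθ. -/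
/-!
For i.i.d. draws `x₀,…,x_m` from `μ` and an acceptance predicate `P`, splitting off the `j`-th
coordinate shows that `1{P xⱼ} f(xⱼ) / #{accepted}` has expectation `E[1_P f] · K`, where
`K = E[(1 + #{accepted among m draws})⁻¹] > 0` depends neither on `f` nor on `j`. Hence the
self-normalized mean has expectation `(m + 1) E[1_P f] K`. For `f = 1` the self-normalized mean is
the indicator of "some acceptance" (it is `0 / 0 = 0` otherwise), so conditioning on that event
yields `E[1_P f] / μ(P)`.

For `θ ~ q_φ`, `t ~ U(0,1)` and acceptance `t < p(θ)/C` one has `E[1_P f(θ)] = ∫ p q_φ f / C`.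
With `f = ∂_φ log q_φ` we have `q_φ f = ∂_φ q_φ` pointwise (where `q_φ(θ) = 0`, `φ` minimizes
`s ↦ q_s(θ)`), so the ratio is `∫ p ∂_φ q_φ / ∫ p q_φ = ∂_φ log ∫ p q_φ`.
-/

open MeasureTheory Filter Topology Set

theorem measurable_deriv_of_differentiableAt {Θ : Type*} [MeasurableSpace Θ] {q : ℝ → Θ → ℝ}
    (hqm : ∀ s, Measurable (q s)) {φ : ℝ} (hqd : ∀ θ, DifferentiableAt ℝ (fun s => q s θ) φ) :
    Measurable fun θ => deriv (fun s => q s θ) φ := by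
  have hseq : Tendsto (fun n : ℕ => (n : ℝ)⁻¹) atTop (𝓝[≠] 0) :=
    (tendsto_inv_atTop_nhdsGT_zero.comp tendsto_natCast_atTop_atTop).mono_right
      (nhdsGT_le_nhdsNE 0)
  refine measurable_of_tendsto_metrizable
    (f := fun n θ => (n : ℝ)⁻¹⁻¹ • (q (φ + (n : ℝ)⁻¹) θ - q φ θ))
    (fun n => ((hqm _).sub (hqm φ)).const_smul ((n : ℝ)⁻¹⁻¹)) (tendsto_pi_nhds.2 fun θ => ?_)
  exact (hqd θ).hasDerivAt.tendsto_slope_zero.comp hseq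

theorem mul_deriv_log_comp_eq_deriv {q : ℝ → ℝ} {φ : ℝ} (hq0 : ∀ s, 0 ≤ q s)
    (hqd : DifferentiableAt ℝ q φ) : q φ * deriv (fun s => Real.log (q s)) φ = deriv q φ := by
  rcases (hq0 φ).eq_or_lt with h | h
  · have hmin : IsLocalMin q φ := Eventually.of_forall fun s => h ▸ hq0 s
    rw [← h, zero_mul, hmin.deriv_eq_zero]
  · rw [(hqd.hasDerivAt.log h.ne').deriv]
    field_simp

theorem aestronglyMeasurable_deriv_log_withDensity {Θ : Type*} [MeasurableSpace Θ] (ν : Measure Θ)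
    {q : ℝ → Θ → ℝ} (hqm : ∀ s, Measurable (q s)) (hq0 : ∀ s θ, 0 ≤ q s θ) {φ : ℝ}
    (hqd : ∀ θ, DifferentiableAt ℝ (fun s => q s θ) φ) :
    AEStronglyMeasurable (fun θ => deriv (fun s => Real.log (q s θ)) φ)
      (ν.withDensity fun θ => ENNReal.ofReal (q φ θ)) := by
  refine ((measurable_deriv_of_differentiableAt hqm hqd).div (hqm φ)).aestronglyMeasurable.congr ?_
  rw [EventuallyEq, ae_withDensity_iff (hqm φ).ennreal_ofReal]
  refine ae_of_all _ fun θ hθ => ?_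
  have hpos : 0 < q φ θ := ENNReal.ofReal_pos.1 (pos_iff_ne_zero.2 hθ)
  exact (eq_div_of_mul_eq hpos.ne'
    ((mul_comm _ _).trans (mul_deriv_log_comp_eq_deriv (fun s => hq0 s θ) (hqd θ)))).symm

section UniformAcceptance

variable {Θ : Type*} [MeasurableSpace Θ]

theorem integral_withDensity_ofReal (ν : Measure Θ) {w : Θ → ℝ} (hw : Measurable w)
    (hw0 : ∀ θ, 0 ≤ w θ) (g : Θ → ℝ) :
    ∫ θ, g θ ∂ν.withDensity (fun θ => ENNReal.ofReal (w θ)) = ∫ θ, w θ * g θ ∂ν := by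
  rw [integral_withDensity_eq_integral_toReal_smul hw.ennreal_ofReal
    (ae_of_all _ fun _ => ENNReal.ofReal_lt_top)]
  simp [ENNReal.toReal_ofReal (hw0 _)]

theorem volume_restrict_Ioo_zero_one_Iio {t : ℝ} (ht : t ≤ 1) :
    volume.restrict (Ioo (0 : ℝ) 1) (Iio t) = ENNReal.ofReal t := by
  rw [Measure.restrict_apply measurableSet_Iio, Iio_inter_Ioo, min_eq_left ht, Real.volume_Ioo,
    sub_zero]

theorem map_fst_restrict_prod_uniform (μ : Measure Θ) [SFinite μ] {a : Θ → ℝ} (ha : Measurable a)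
    (ha1 : ∀ θ, a θ ≤ 1) :
    ((μ.prod (volume.restrict (Ioo (0 : ℝ) 1))).restrict {x | x.2 < a x.1}).map Prod.fst =
      μ.withDensity fun θ => ENNReal.ofReal (a θ) := by
  have hA : MeasurableSet {x : Θ × ℝ | x.2 < a x.1} :=
    measurableSet_lt measurable_snd (ha.comp measurable_fst)
  ext s hs
  rw [Measure.map_apply measurable_fst hs, Measure.restrict_apply (measurable_fst hs),
    withDensity_apply _ hs, Measure.prod_apply ((measurable_fst hs).inter hA),
    ← lintegral_indicator hs]
  refine lintegral_congr fun θ => ?_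
  by_cases hθ : θ ∈ s
  · simp [hθ, preimage, ← volume_restrict_Ioo_zero_one_Iio (ha1 θ), Iio_def]
  · simp [hθ, preimage]

theorem setIntegral_lt_prod_uniform (μ : Measure Θ) [SFinite μ] {a : Θ → ℝ} (ha : Measurable a)
    (ha0 : ∀ θ, 0 ≤ a θ) (ha1 : ∀ θ, a θ ≤ 1) {f : Θ → ℝ} (hf : AEStronglyMeasurable f μ) :
    ∫ x in {x : Θ × ℝ | x.2 < a x.1}, f x.1 ∂(μ.prod (volume.restrict (Ioo 0 1))) =
      ∫ θ, a θ * f θ ∂μ := by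
  have hmap := map_fst_restrict_prod_uniform μ ha ha1
  rw [← integral_map measurable_fst.aemeasurable
      (hmap ▸ hf.mono_ac (withDensity_absolutelyContinuous _ _)),
    hmap, integral_withDensity_ofReal μ ha ha0]

theorem setIntegral_lt_div_withDensity_prod_uniform (ν : Measure Θ) [SFinite ν] {w p : Θ → ℝ}
    {C : ℝ} (hw : Measurable w) (hw0 : ∀ θ, 0 ≤ w θ) (hp : Measurable p) (hp0 : ∀ θ, 0 ≤ p θ)
    (hpC : ∀ θ, p θ ≤ C) (hC : 0 < C) (h : Θ → ℝ)
    (hh : AEStronglyMeasurable h (ν.withDensity fun θ => ENNReal.ofReal (w θ))) :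
    ∫ x in {x : Θ × ℝ | x.2 < p x.1 / C}, h x.1
        ∂(ν.withDensity fun θ => ENNReal.ofReal (w θ)).prod (volume.restrict (Ioo 0 1)) =
      (∫ θ, p θ * (w θ * h θ) ∂ν) / C := by
  rw [setIntegral_lt_prod_uniform _ (hp.div_const C) (fun θ => div_nonneg (hp0 θ) hC.le)
    (fun θ => (div_le_one hC).2 (hpC θ)) hh, integral_withDensity_ofReal ν hw hw0,
    ← integral_div]
  exact integral_congr_ae (ae_of_all _ fun θ => by ring)

end UniformAcceptance

section SelfNormalized

variable {ι X : Type*} (P : X → Prop) [DecidablePred P]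

def acceptedSum [Fintype ι] (f : X → ℝ) (ω : ι → X) : ℝ :=
  ∑ j, if P (ω j) then f (ω j) else 0

noncomputable def selfNormalizedMean [Fintype ι] (f : X → ℝ) (ω : ι → X) : ℝ :=
  acceptedSum P f ω / acceptedSum P 1 ω

variable {P}

theorem acceptedSum_one_nonneg [Fintype ι] (ω : ι → X) : 0 ≤ acceptedSum P 1 ω :=
  Finset.sum_nonneg fun j _ => by split_ifs <;> norm_num

theorem acceptedSum_one_eq_zero_iff [Fintype ι] {ω : ι → X} :
    acceptedSum P 1 ω = 0 ↔ ∀ j, ¬ P (ω j) := by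
  rw [acceptedSum, Finset.sum_eq_zero_iff_of_nonneg fun j _ => by split_ifs <;> norm_num]
  simp

theorem acceptedSum_insertNth {m : ℕ} (f : X → ℝ) (j : Fin (m + 1)) (x : X) (ω : Fin m → X) :
    acceptedSum P f (Fin.insertNth j x ω) = (if P x then f x else 0) + acceptedSum P f ω := by
  simp only [acceptedSum, Fin.sum_univ_succAbove _ j, Fin.insertNth_apply_same,
    Fin.insertNth_apply_succAbove]

theorem selfNormalizedMean_eq_sum [Fintype ι] (f : X → ℝ) (ω : ι → X) :
    selfNormalizedMean P f ω = ∑ j, {x | P x}.indicator f (ω j) * (acceptedSum P 1 ω)⁻¹ := by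
  simp only [selfNormalizedMean, acceptedSum, div_eq_mul_inv, Finset.sum_mul, Set.indicator_apply,
    Set.mem_ofPred_eq]

theorem selfNormalizedMean_one [Fintype ι] (ω : ι → X) :
    selfNormalizedMean P 1 ω = {ω : ι → X | ∃ j, P (ω j)}.indicator 1 ω := by
  by_cases h : ∃ j, P (ω j)
  · have : acceptedSum P 1 ω ≠ 0 := fun h0 => by
      obtain ⟨j, hj⟩ := h
      exact acceptedSum_one_eq_zero_iff.1 h0 j hj
    simp [selfNormalizedMean, Set.indicator_of_mem (show ω ∈ {ω : ι → X | ∃ j, P (ω j)} from h),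
      this]
  · push Not at h
    simp [selfNormalizedMean, acceptedSum_one_eq_zero_iff.2 h,
      Set.indicator_of_notMem (show ω ∉ {ω : ι → X | ∃ j, P (ω j)} by simpa using h)]

theorem selfNormalizedMean_of_forall_not [Fintype ι] (f : X → ℝ) {ω : ι → X}
    (h : ∀ j, ¬ P (ω j)) : selfNormalizedMean P f ω = 0 := by
  rw [selfNormalizedMean, acceptedSum_one_eq_zero_iff.2 h, div_zero]

theorem indicator_mul_inv_acceptedSum_insertNth {m : ℕ} (f : X → ℝ) (j : Fin (m + 1)) (x : X)
    (ω : Fin m → X) :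
    {x | P x}.indicator f x * (acceptedSum P 1 (Fin.insertNth j x ω))⁻¹ =
      {x | P x}.indicator f x * (1 + acceptedSum P 1 ω)⁻¹ := by
  by_cases hx : P x
  · simp [acceptedSum_insertNth, hx]
  · simp [hx]

variable [MeasurableSpace X]

theorem measurable_acceptedSum_one [Fintype ι] (hP : MeasurableSet {x | P x}) :
    Measurable (acceptedSum P 1 : (ι → X) → ℝ) :=
  Finset.measurable_sum _ fun j _ =>
    Measurable.ite (measurable_pi_apply j hP) measurable_const measurable_const

theorem measurePreserving_piFinSuccAbove_const (μ : Measure X) [SigmaFinite μ] {m : ℕ}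
    (j : Fin (m + 1)) :
    MeasurePreserving (MeasurableEquiv.piFinSuccAbove (fun _ => X) j)
      (Measure.pi fun _ => μ) (μ.prod (Measure.pi fun _ : Fin m => μ)) :=
  measurePreserving_piFinSuccAbove (fun _ => μ) j

theorem indicator_apply_mul_inv_acceptedSum_comp_symm {m : ℕ} (f : X → ℝ) (j : Fin (m + 1)) :
    (fun ω : Fin (m + 1) → X => {x | P x}.indicator f (ω j) * (acceptedSum P 1 ω)⁻¹) ∘
        (MeasurableEquiv.piFinSuccAbove (fun _ => X) j).symm =
      fun z => {x | P x}.indicator f z.1 * (1 + acceptedSum P 1 z.2)⁻¹ := by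
  funext ⟨x, ω⟩
  simp only [Function.comp, MeasurableEquiv.piFinSuccAbove_symm_apply, Fin.insertNthEquiv_apply,
    Fin.insertNth_apply_same]
  exact indicator_mul_inv_acceptedSum_insertNth f j x ω

variable (μ : Measure X) [IsProbabilityMeasure μ]

theorem integrable_inv_one_add_acceptedSum [Fintype ι] (hP : MeasurableSet {x | P x}) :
    Integrable (fun ω => (1 + acceptedSum P 1 ω)⁻¹) (Measure.pi fun _ : ι => μ) := by
  refine Integrable.of_bound
    (measurable_const.add (measurable_acceptedSum_one hP)).inv.aestronglyMeasurable 1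
    (ae_of_all _ fun ω => ?_)
  have := acceptedSum_one_nonneg (P := P) ω
  rw [Real.norm_of_nonneg (by positivity)]
  exact inv_le_one_of_one_le₀ (by linarith)

theorem integral_inv_one_add_acceptedSum_pos [Fintype ι] (hP : MeasurableSet {x | P x}) :
    0 < ∫ ω, (1 + acceptedSum P 1 ω)⁻¹ ∂(Measure.pi fun _ : ι => μ) := by
  have hpos : ∀ ω : ι → X, 0 < (1 + acceptedSum P 1 ω)⁻¹ := fun ω =>
    inv_pos.2 (by linarith [acceptedSum_one_nonneg (P := P) ω])
  rw [integral_pos_iff_support_of_nonneg (fun ω => (hpos ω).le)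
    (integrable_inv_one_add_acceptedSum μ hP), Function.support_eq_univ fun ω => (hpos ω).ne']
  simp

theorem integral_indicator_apply_mul_inv_acceptedSum {m : ℕ} (hP : MeasurableSet {x | P x})
    (f : X → ℝ) (j : Fin (m + 1)) :
    ∫ ω, {x | P x}.indicator f (ω j) * (acceptedSum P 1 ω)⁻¹ ∂(Measure.pi fun _ => μ) =
      (∫ x in {x | P x}, f x ∂μ) *
        ∫ ω, (1 + acceptedSum P 1 ω)⁻¹ ∂(Measure.pi fun _ : Fin m => μ) := by
  rw [← (measurePreserving_piFinSuccAbove_const μ j).symm.integral_comp', ← integral_indicator hP,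
    ← integral_prod_mul]
  exact congrArg (integral _) (indicator_apply_mul_inv_acceptedSum_comp_symm f j)

theorem integrable_indicator_apply_mul_inv_acceptedSum {m : ℕ} (hP : MeasurableSet {x | P x})
    {f : X → ℝ} (hf : Integrable ({x | P x}.indicator f) μ) (j : Fin (m + 1)) :
    Integrable (fun ω => {x | P x}.indicator f (ω j) * (acceptedSum P 1 ω)⁻¹)
      (Measure.pi fun _ => μ) := by
  rw [← (measurePreserving_piFinSuccAbove_const μ j).symm.integrable_comp_emb
    (MeasurableEquiv.measurableEmbedding _), indicator_apply_mul_inv_acceptedSum_comp_symm]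
  exact hf.mul_prod (integrable_inv_one_add_acceptedSum μ hP)

theorem integrable_indicator_of_integrable_selfNormalizedMean {m : ℕ}
    (hP : MeasurableSet {x | P x}) {f : X → ℝ}
    (h : Integrable (selfNormalizedMean P f) (Measure.pi fun _ : Fin (m + 1) => μ)) :
    Integrable ({x | P x}.indicator f) μ := by
  have hprod := ((measurePreserving_piFinSuccAbove_const μ 0).symm.integrable_comp_emb
    (MeasurableEquiv.measurableEmbedding _)).2 h
  -- on a section through fixed other draws `ω`, the mean is an affine function of `1_P f`
  obtain ⟨ω, hω⟩ := hprod.prod_left_ae.exists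
  simp only [Function.comp, MeasurableEquiv.piFinSuccAbove_symm_apply] at hω
  have hk : 1 + acceptedSum P 1 ω ≠ 0 := by linarith [acceptedSum_one_nonneg (P := P) ω]
  have hsection : Set.EqOn f (fun x => (1 + acceptedSum P 1 ω) *
      selfNormalizedMean P f (Fin.insertNth 0 x ω) - acceptedSum P f ω) {x | P x} := by
    intro x hx
    simp only [selfNormalizedMean, acceptedSum_insertNth, if_pos (show P x from hx), Pi.one_apply]
    field_simp
    ring
  rw [Set.indicator_congr hsection]
  exact ((hω.const_mul _).sub (integrable_const _)).indicator hP

theorem integral_selfNormalizedMean {m : ℕ} (hP : MeasurableSet {x | P x}) (f : X → ℝ) :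
    ∫ ω, selfNormalizedMean P f ω ∂(Measure.pi fun _ : Fin (m + 1) => μ) =
      (m + 1) * ((∫ x in {x | P x}, f x ∂μ) *
        ∫ ω, (1 + acceptedSum P 1 ω)⁻¹ ∂(Measure.pi fun _ : Fin m => μ)) := by
  by_cases hf : Integrable ({x | P x}.indicator f) μ
  · simp_rw [selfNormalizedMean_eq_sum]
    rw [integral_finsetSum _ fun j _ => integrable_indicator_apply_mul_inv_acceptedSum μ hP hf j]
    simp [integral_indicator_apply_mul_inv_acceptedSum μ hP f]
  · have hf' : ∫ x in {x | P x}, f x ∂μ = 0 := by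
      rw [← integral_indicator hP, integral_undef hf]
    rw [hf', integral_undef (mt (integrable_indicator_of_integrable_selfNormalizedMean μ hP) hf)]
    simp

theorem setIntegral_selfNormalizedMean_div_measureReal {n : ℕ} (hn : 0 < n)
    (hP : MeasurableSet {x | P x}) (f : X → ℝ) :
    (∫ ω in {ω : Fin n → X | ∃ j, P (ω j)}, selfNormalizedMean P f ω ∂(Measure.pi fun _ => μ)) /
        (Measure.pi fun _ => μ).real {ω : Fin n → X | ∃ j, P (ω j)} =
      (∫ x in {x | P x}, f x ∂μ) / μ.real {x | P x} := by
  obtain ⟨m, rfl⟩ : ∃ m, n = m + 1 := Nat.exists_eq_succ_of_ne_zero hn.ne'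
  have hA : MeasurableSet {ω : Fin (m + 1) → X | ∃ j, P (ω j)} := by
    simp only [Set.ofPred_exists]
    exact MeasurableSet.iUnion fun j => measurable_pi_apply j hP
  have hmeasA : (Measure.pi fun _ => μ).real {ω : Fin (m + 1) → X | ∃ j, P (ω j)} =
      ∫ ω : Fin (m + 1) → X, selfNormalizedMean P 1 ω ∂(Measure.pi fun _ => μ) := by
    simp_rw [selfNormalizedMean_one, integral_indicator_one hA]
  have hmeasP : μ.real {x | P x} = ∫ x in {x | P x}, (1 : X → ℝ) x ∂μ := by simp
  rw [setIntegral_eq_integral_of_forall_compl_eq_zero fun ω hω =>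
      selfNormalizedMean_of_forall_not f (by simpa using hω),
    hmeasA, hmeasP, integral_selfNormalizedMean μ hP, integral_selfNormalizedMean μ hP,
    mul_div_mul_left _ _ (by positivity),
    mul_div_mul_right _ _ (integral_inv_one_add_acceptedSum_pos μ hP).ne']

end SelfNormalized

theorem integral_mul_pos_of_pos {Θ : Type*} [MeasurableSpace Θ] {ν : Measure Θ} {w q : Θ → ℝ}
    {C : ℝ} (hwm : Measurable w) (hw : ∀ θ, 0 < w θ) (hwC : ∀ θ, w θ ≤ C) (hq0 : 0 ≤ q)
    (hq : 0 < ∫ θ, q θ ∂ν) : 0 < ∫ θ, w θ * q θ ∂ν := by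
  have hqi : Integrable q ν := Integrable.of_integral_ne_zero hq.ne'
  have hwq : Integrable (fun θ => w θ * q θ) ν := hqi.bdd_mul hwm.aestronglyMeasurable
    (ae_of_all _ fun θ => (Real.norm_of_nonneg (hw θ).le).trans_le (hwC θ))
  rw [integral_pos_iff_support_of_nonneg (fun θ => mul_nonneg (hw θ).le (hq0 θ)) hwq,
    Function.support_mul, Function.support_eq_univ fun θ => (hw θ).ne', univ_inter]
  exact (integral_pos_iff_support_of_nonneg hq0 hqi).1 hq

/-- Unbiasedness of the rejection-sampling gradient estimator for the
logarithmic score: with `θ₁,…,θ_M` i.i.d. from `q_φ`, `t₁,…,t_M` i.i.d.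
Uniform(0,1), and `0 < p(y|θ) ≤ C`, conditionally on at least one acceptance
`t_j < p(y|θ_j)/C`, the estimator
`g^RS = (∑ⱼ 1{accept j} ∂_φ log q_φ(θⱼ)) / (∑ⱼ 1{accept j})`
has expectation `∂_φ log ∫ p(y|θ) q_φ(θ) dθ`. -/
theorem stmt14 {Θ : Type*} [MeasurableSpace Θ] (ν : Measure Θ) [SigmaFinite ν]
    (M : ℕ) (hM : 0 < M)
    (qfam : ℝ → Θ → ℝ) (lik : Θ → ℝ) (C : ℝ) (hC : 0 < C)
    (hlik : ∀ θ, 0 < lik θ ∧ lik θ ≤ C) (hlikm : Measurable lik)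
    (φ : ℝ)
    (hqm : ∀ s, Measurable (qfam s))
    (hq0 : ∀ s θ, 0 ≤ qfam s θ)
    (hq1 : ∀ s, ∫ θ, qfam s θ ∂ν = 1)
    -- pointwise differentiability of the family:
    (hqd : ∀ θ, DifferentiableAt ℝ (fun s => qfam s θ) φ)
    -- differentiation under the integral sign is valid:
    (hDUI : HasDerivAt (fun s => ∫ θ, lik θ * qfam s θ ∂ν)
      (∫ θ, lik θ * deriv (fun s => qfam s θ) φ ∂ν) φ)
    -- the joint law of one draw `(θ, t)`:
    (base : Measure (Θ × ℝ)) [IsProbabilityMeasure base]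
    (hbase : base = (ν.withDensity fun θ => ENNReal.ofReal (qfam φ θ)).prod
      (MeasureTheory.volume.restrict (Set.Ioo (0 : ℝ) 1)))
    -- the joint law of the `M` i.i.d. draws:
    (π : Measure (Fin M → Θ × ℝ)) (hπ : π = Measure.pi fun _ => base)
    -- the acceptance event:
    (A : Set (Fin M → Θ × ℝ))
    (hA : A = {ω | ∃ j, (ω j).2 < lik (ω j).1 / C})
    -- the rejection-sampling estimator:
    (g : (Fin M → Θ × ℝ) → ℝ)
    (hg : ∀ ω, g ω =
      (∑ j, if (ω j).2 < lik (ω j).1 / C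
        then deriv (fun s => Real.log (qfam s (ω j).1)) φ else 0)
      / (∑ j, if (ω j).2 < lik (ω j).1 / C then (1 : ℝ) else 0)) :
    (∫ ω in A, g ω ∂π) / (π A).toReal
      = deriv (fun s => Real.log (∫ θ, lik θ * qfam s θ ∂ν)) φ := by
  subst hπ hA hbase
  have hP : MeasurableSet {x : Θ × ℝ | x.2 < lik x.1 / C} :=
    measurableSet_lt measurable_snd ((hlikm.div_const C).comp measurable_fst)
  have hdraw := setIntegral_lt_div_withDensity_prod_uniform ν (hqm φ) (hq0 φ) hlikm
    (fun θ => (hlik θ).1.le) (fun θ => (hlik θ).2) hC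
  have hZ : 0 < ∫ θ, lik θ * qfam φ θ ∂ν := integral_mul_pos_of_pos hlikm
    (fun θ => (hlik θ).1) (fun θ => (hlik θ).2) (hq0 φ) (by simp [hq1])
  have hmeas : ((ν.withDensity fun θ => ENNReal.ofReal (qfam φ θ)).prod
      (volume.restrict (Ioo 0 1))).real {x : Θ × ℝ | x.2 < lik x.1 / C} =
        (∫ θ, lik θ * qfam φ θ ∂ν) / C := by
    simpa using hdraw (fun _ => 1) aestronglyMeasurable_const
  have hscore : ∫ θ, lik θ * (qfam φ θ * deriv (fun s => Real.log (qfam s θ)) φ) ∂ν =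
      ∫ θ, lik θ * deriv (fun s => qfam s θ) φ ∂ν :=
    integral_congr_ae (ae_of_all _ fun θ =>
      congrArg (lik θ * ·) (mul_deriv_log_comp_eq_deriv (fun s => hq0 s θ) (hqd θ)))
  rw [← measureReal_def, funext hg]
  refine (setIntegral_selfNormalizedMean_div_measureReal _ hM hP
    fun x => deriv (fun s => Real.log (qfam s x.1)) φ).trans ?_
  rw [hdraw _ (aestronglyMeasurable_deriv_log_withDensity ν hqm hq0 hqd), hmeas, hscore,
    div_div_div_cancel_right₀ hC.ne', (hDUI.log hZ.ne').deriv]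
end
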